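/- Let p ∈ [1, ∞), let H be an open affine half-space in ℝ^N, let Ω ⊊ ℝ^N be a nonempty open set satisfying Ω = Ω_H, and let f : Ω → ℝ be a nonnegative measurable function with f ∈ L^p(Ω). Then the polarization f_H (defined on Ω via the zero extension of f) belongs to L^p(Ω) and ‖f_H‖_{L^p(Ω)} = ‖f‖_{L^p(Ω)}. -/

import Mathlib

open MeasureTheory
open scoped RealInnerProductSpace ENNReal

/-- Reflection of `ℝ^N` across the hyperplane `{x : ⟪x, u⟫ = c}` (for a unit vector `u`). -/
noncomputable def reflHyp {N : ℕ} (u : EuclideanSpace ℝ (Fin N)) (c : ℝ)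
    (x : EuclideanSpace ℝ (Fin N)) : EuclideanSpace ℝ (Fin N) :=
  x - (2 * (⟪x, u⟫ - c)) • u

/-- The open affine half-space `{x : ⟪x, u⟫ < c}`. -/
def halfSpace {N : ℕ} (u : EuclideanSpace ℝ (Fin N)) (c : ℝ) :
    Set (EuclideanSpace ℝ (Fin N)) :=
  {x | ⟪x, u⟫ < c}

/-- Polarization of a set `Ω` with respect to the half-space `H = halfSpace u c`:
`Ω_H = ((Ω ∪ σ_H(Ω)) ∩ H) ∪ (Ω ∩ σ_H(Ω))`. -/
noncomputable def polSet {N : ℕ} (u : EuclideanSpace ℝ (Fin N)) (c : ℝ)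
    (Ω : Set (EuclideanSpace ℝ (Fin N))) : Set (EuclideanSpace ℝ (Fin N)) :=
  ((Ω ∪ reflHyp u c '' Ω) ∩ halfSpace u c) ∪ (Ω ∩ reflHyp u c '' Ω)

/-- Polarization of a function `f : ℝ^N → ℝ` with respect to `H = halfSpace u c`:
`f_H(x) = max (f x) (f (σ_H x))` if `x ∈ H`, and `f_H(x) = min (f x) (f (σ_H x))` otherwise. -/
noncomputable def polFun {N : ℕ} (u : EuclideanSpace ℝ (Fin N)) (c : ℝ)
    (f : EuclideanSpace ℝ (Fin N) → ℝ) (x : EuclideanSpace ℝ (Fin N)) : ℝ :=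
  if ⟪x, u⟫ < c then max (f x) (f (reflHyp u c x))
  else min (f x) (f (reflHyp u c x))

/-! Off the null hyperplane `∂H`, polarization only swaps or fixes the values at the two points
of each orbit `{x, σ_H x}`, and `σ_H` preserves Lebesgue measure; hence `f_H` and `f` are
equidistributed and have the same `L^p` norms. Invariance `Ω = Ω_H` keeps `f_H` supported in `Ω`. -/

section Polarization

variable {N : ℕ} {u : EuclideanSpace ℝ (Fin N)} {c : ℝ}

lemma inner_reflHyp (hu : ‖u‖ = 1) (x : EuclideanSpace ℝ (Fin N)) :
    ⟪reflHyp u c x, u⟫ = 2 * c - ⟪x, u⟫ := by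
  simp only [reflHyp, inner_sub_left, real_inner_smul_left, real_inner_self_eq_norm_sq, hu]
  ring

lemma reflHyp_reflHyp (hu : ‖u‖ = 1) (x : EuclideanSpace ℝ (Fin N)) :
    reflHyp u c (reflHyp u c x) = x := by
  rw [reflHyp, inner_reflHyp hu, reflHyp, sub_sub, ← add_smul]
  ring_nf
  rw [zero_smul, sub_zero]

lemma continuous_reflHyp : Continuous (reflHyp u c) := by
  unfold reflHyp
  fun_prop

lemma measurePreserving_reflHyp (hu : ‖u‖ = 1) :
    MeasurePreserving (reflHyp u c) volume volume := by
  have hσ : reflHyp u c = fun x => (ℝ ∙ u)ᗮ.reflection x + (2 * c) • u := by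
    funext x
    rw [Submodule.reflection_orthogonal_apply, Submodule.reflection_apply,
      Submodule.starProjection_unit_singleton ℝ hu, reflHyp, real_inner_comm u x]
    module
  rw [hσ]
  exact (measurePreserving_add_right volume _).comp (ℝ ∙ u)ᗮ.reflection.measurePreserving

lemma volume_setOf_inner_eq_eq_zero (hu : ‖u‖ = 1) :
    volume {x : EuclideanSpace ℝ (Fin N) | ⟪x, u⟫ = c} = 0 := by
  let s : AffineSubspace ℝ (EuclideanSpace ℝ (Fin N)) := .mk' (c • u) (ℝ ∙ u)ᗮ
  have hs : (s : Set _) = {x | ⟪x, u⟫ = c} := by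
    ext x
    simp [s, AffineSubspace.mem_mk', Submodule.mem_orthogonal_singleton_iff_inner_left,
      inner_sub_left, real_inner_smul_left, hu, sub_eq_zero]
  rw [← hs]
  refine Measure.addHaar_affineSubspace _ s fun htop => ?_
  have hmem : c • u + u ∈ (s : Set (EuclideanSpace ℝ (Fin N))) := by simp [htop]
  rw [hs, Set.mem_ofPred_eq, inner_add_left, real_inner_smul_left, real_inner_self_eq_norm_sq,
    hu] at hmem
  norm_num at hmem

lemma measurable_polFun {g : EuclideanSpace ℝ (Fin N) → ℝ} (hg : Measurable g) :
    Measurable (polFun u c g) := by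
  have hσ : Measurable (g ∘ reflHyp u c) := hg.comp continuous_reflHyp.measurable
  exact Measurable.ite (measurableSet_lt (by fun_prop) measurable_const)
    (hg.max hσ) (hg.min hσ)

lemma polFun_pair_eq_or_swap (hu : ‖u‖ = 1) (g : EuclideanSpace ℝ (Fin N) → ℝ)
    {x : EuclideanSpace ℝ (Fin N)} (hx : ⟪x, u⟫ ≠ c) :
    (polFun u c g x = g x ∧ polFun u c g (reflHyp u c x) = g (reflHyp u c x)) ∨
      (polFun u c g x = g (reflHyp u c x) ∧ polFun u c g (reflHyp u c x) = g x) := by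
  have hσx := inner_reflHyp (c := c) hu x
  simp only [polFun, reflHyp_reflHyp hu]
  rcases hx.lt_or_gt with h | h
  · rw [if_pos h, if_neg (by linarith)]
    rcases le_total (g x) (g (reflHyp u c x)) with hle | hle <;> simp [hle]
  · rw [if_neg (by linarith), if_pos (by linarith)]
    rcases le_total (g x) (g (reflHyp u c x)) with hle | hle <;> simp [hle]

lemma lintegral_comp_polFun (hu : ‖u‖ = 1) {g : EuclideanSpace ℝ (Fin N) → ℝ}
    (hg : Measurable g) {Φ : ℝ → ℝ≥0∞} (hΦ : Measurable Φ) :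
    ∫⁻ x, Φ (polFun u c g x) = ∫⁻ x, Φ (g x) := by
  have hσ := measurePreserving_reflHyp (c := c) hu
  have hpair : ∀ᵐ x, Φ (polFun u c g x) + Φ (polFun u c g (reflHyp u c x)) =
      Φ (g x) + Φ (g (reflHyp u c x)) := by
    filter_upwards [measure_eq_zero_iff_ae_notMem.mp (volume_setOf_inner_eq_eq_zero (c := c) hu)]
      with x hx
    rcases polFun_pair_eq_or_swap hu g hx with ⟨h₁, h₂⟩ | ⟨h₁, h₂⟩
    · rw [h₁, h₂]
    · rw [h₁, h₂, add_comm]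
  have hΦp : Measurable fun x => Φ (polFun u c g x) := hΦ.comp (measurable_polFun hg)
  have hΦg : Measurable fun x => Φ (g x) := hΦ.comp hg
  refine (ENNReal.mul_right_inj two_ne_zero ENNReal.ofNat_ne_top).mp ?_
  calc 2 * ∫⁻ x, Φ (polFun u c g x)
      = ∫⁻ x, Φ (polFun u c g x) + Φ (polFun u c g (reflHyp u c x)) := by
        rw [lintegral_add_left hΦp, hσ.lintegral_comp hΦp, two_mul]
    _ = ∫⁻ x, Φ (g x) + Φ (g (reflHyp u c x)) := lintegral_congr_ae hpair
    _ = 2 * ∫⁻ x, Φ (g x) := by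
        rw [lintegral_add_left hΦg, hσ.lintegral_comp hΦg, two_mul]

lemma identDistrib_polFun (hu : ‖u‖ = 1) {g : EuclideanSpace ℝ (Fin N) → ℝ}
    (hg : Measurable g) : ProbabilityTheory.IdentDistrib (polFun u c g) g where
  aemeasurable_fst := (measurable_polFun hg).aemeasurable
  aemeasurable_snd := hg.aemeasurable
  map_eq := Measure.ext_of_lintegral _ fun Φ hΦ => by
    rw [lintegral_map hΦ (measurable_polFun hg), lintegral_map hΦ hg,
      lintegral_comp_polFun hu hg hΦ]

/-- Off `Ω`, the maximum is taken over two points outside `Ω`, and the minimum is against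
`0 ≤ f`. -/
lemma support_polFun_indicator_subset (hu : ‖u‖ = 1) {Ω : Set (EuclideanSpace ℝ (Fin N))}
    (hΩ : polSet u c Ω ⊆ Ω) {f : EuclideanSpace ℝ (Fin N) → ℝ} (hf : ∀ x ∈ Ω, 0 ≤ f x) :
    Function.support (polFun u c (Ω.indicator f)) ⊆ Ω := by
  intro x hx
  by_contra hxΩ
  apply hx
  rw [polFun, Set.indicator_of_notMem hxΩ]
  split_ifs with hxH
  · have hσx : reflHyp u c x ∉ Ω := fun hσx =>
      hxΩ (hΩ (Or.inl ⟨Or.inr ⟨_, hσx, reflHyp_reflHyp hu x⟩, hxH⟩))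
    rw [Set.indicator_of_notMem hσx, max_self]
  · exact min_eq_left (Set.indicator_nonneg hf _)

end Polarization

theorem polFun_memLp_and_eLpNorm_eq_general {N : ℕ} (p : ℝ≥0∞)
    (u : EuclideanSpace ℝ (Fin N)) (hu : ‖u‖ = 1) (c : ℝ)
    (Ω : Set (EuclideanSpace ℝ (Fin N))) (hopen : IsOpen Ω)
    (hΩ : Ω = polSet u c Ω)
    (f : EuclideanSpace ℝ (Fin N) → ℝ) (hmeas : Measurable (Ω.indicator f))
    (hf : ∀ x ∈ Ω, 0 ≤ f x) (hfLp : MemLp f p (volume.restrict Ω)) :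
    MemLp (polFun u c (Ω.indicator f)) p (volume.restrict Ω) ∧
      eLpNorm (polFun u c (Ω.indicator f)) p (volume.restrict Ω) =
        eLpNorm f p (volume.restrict Ω) := by
  have hnorm : eLpNorm (polFun u c (Ω.indicator f)) p (volume.restrict Ω) =
      eLpNorm f p (volume.restrict Ω) := by
    rw [eLpNorm_restrict_eq_of_support_subset (support_polFun_indicator_subset hu hΩ.ge hf),
      (identDistrib_polFun hu hmeas).eLpNorm_eq,
      eLpNorm_indicator_eq_eLpNorm_restrict hopen.measurableSet]
  exact ⟨⟨(measurable_polFun hmeas).aestronglyMeasurable, hnorm ▸ hfLp.eLpNorm_lt_top⟩, hnorm⟩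

/-- For `p ∈ [1, ∞)`, a nonempty open proper subset `Ω ⊊ ℝ^N` with `Ω = Ω_H`,
and a nonnegative measurable `f ∈ L^p(Ω)`, the polarization `f_H` (via the zero extension)
belongs to `L^p(Ω)` with the same `L^p(Ω)` norm as `f`. -/
theorem polFun_memLp_and_eLpNorm_eq {N : ℕ} (p : ℝ≥0∞) (hp1 : 1 ≤ p) (hptop : p ≠ ⊤)
    (u : EuclideanSpace ℝ (Fin N)) (hu : ‖u‖ = 1) (c : ℝ)
    (Ω : Set (EuclideanSpace ℝ (Fin N))) (hne : Ω.Nonempty) (hopen : IsOpen Ω)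
    (hproper : Ω ≠ Set.univ) (hΩ : Ω = polSet u c Ω)
    (f : EuclideanSpace ℝ (Fin N) → ℝ) (hmeas : Measurable (Ω.indicator f))
    (hf : ∀ x ∈ Ω, 0 ≤ f x) (hfLp : MemLp f p (volume.restrict Ω)) :
    MemLp (polFun u c (Ω.indicator f)) p (volume.restrict Ω) ∧
      eLpNorm (polFun u c (Ω.indicator f)) p (volume.restrict Ω) =
        eLpNorm f p (volume.restrict Ω) :=
  polFun_memLp_and_eLpNorm_eq_general p u hu c Ω hopen hΩ f hmeas hf hfLp
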